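/- Let X be a Banach space, Y a normed space, F : X ⇉ Y a closed set-valued map, (x̄,ȳ) ∈ gph F, (u,v) ∈ X×Y and γ ∈ (0,1]. If liminf |∇φ^γ(·,y)|(x) > 0, where the liminf is taken over (x,y) →_{(u,v)} (x̄,ȳ) with φ(x,y) > 0 and φ(x,y)^γ/‖(x,y) − (x̄,ȳ)‖ → 0, then there exist reals τ, δ > 0 such that d(x, F⁻¹(y)) ≤ τ [d(y, F(x))]^γ for all (x,y) ∈ B((x̄,ȳ), δ) ∩ ((x̄,ȳ) + cone B((u,v), δ)) with d(y, F(x)) ≤ δ ‖(x,y) − (x̄,ȳ)‖^{1/γ}; that is, F is directionally metrically γ-regular at (x̄,ȳ) in direction (u,v) with modulus τ. -/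

import Mathlib

/-!
Fix `σ > 0` below the liminf of the slopes; then `|∇φ^γ(·,y)|(x) > σ` on a truncated
directional neighbourhood of `(xbar, ybar)`. For `(x, y)` in a smaller such neighbourhood,
Ekeland's principle with constant `σ`, applied to the lower semicontinuous function
`f = φ(·,y)^γ` from `x`, yields `z` with `‖z - x‖ ≤ f(x)/σ` and `|∇f|(z) ≤ σ`. As
`f(x) ≤ δ^γ ‖(x,y) - (xbar,ybar)‖`, the point `(z, y)` is still in the neighbourhood, so the
slope bound forces `φ(z, y) = 0`, i.e. `y ∈ F z` because the graph is closed. Hence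
`d(x, F⁻¹ y) ≤ ‖x - z‖ ≤ σ⁻¹ d(y, F x)^γ`.
-/

open Filter Metric Set Topology
open scoped ENNReal NNReal Classical

noncomputable section

/-- The conic hull `⋃ λ ≥ 0, λ • B((u,v), ε)` of the open ball of radius `ε` around `(u, v)`
in `X × Y`, where `X × Y` carries the sum norm `‖(x,y)‖ = ‖x‖ + ‖y‖`. -/
def coneBall2 {X Y : Type*} [NormedAddCommGroup X] [NormedSpace ℝ X]
    [NormedAddCommGroup Y] [NormedSpace ℝ Y] (u : X) (v : Y) (ε : ℝ) : Set (X × Y) :=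
  {p | ∃ lam : ℝ, 0 ≤ lam ∧ ∃ w : X, ∃ z : Y, ‖w - u‖ + ‖z - v‖ < ε ∧ p = (lam • w, lam • z)}

/-- `F` is directionally metrically `γ`-regular at `(xbar, ybar)` in direction `(u, v)`
with modulus `τ`: there are `δ, ε, η > 0` such that `d(x, F⁻¹(y)) ≤ τ d(y, F(x))^γ`
for all `(x,y) ∈ B((xbar,ybar), δ)` with `(x,y) ∈ (xbar,ybar) + cone B((u,v), ε)` and
`d(y,F(x)) ≤ η ‖(x,y)-(xbar,ybar)‖^(1/γ)`.  Distances to sets are extended-real valued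
(equal to `+∞` for the empty set). -/
def DirHolderRegular {X Y : Type*} [NormedAddCommGroup X] [NormedSpace ℝ X]
    [NormedAddCommGroup Y] [NormedSpace ℝ Y]
    (F : X → Set Y) (xbar : X) (ybar : Y) (u : X) (v : Y) (γ τ : ℝ) : Prop :=
  ∃ δ > (0:ℝ), ∃ ε > (0:ℝ), ∃ η > (0:ℝ), ∀ x : X, ∀ y : Y,
    ‖x - xbar‖ + ‖y - ybar‖ < δ →
    (x - xbar, y - ybar) ∈ coneBall2 u v ε →
    EMetric.infEdist y (F x) ≤ ENNReal.ofReal (η * (‖x - xbar‖ + ‖y - ybar‖) ^ (1/γ)) →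
    EMetric.infEdist x {x' : X | y ∈ F x'} ≤ ENNReal.ofReal τ * EMetric.infEdist y (F x) ^ γ

/-- The lower semicontinuous envelope `φ(x,y) = liminf_{x' → x} d(y, F(x'))`. -/
def lscEnv {X Y : Type*} [NormedAddCommGroup X] [NormedSpace ℝ X] [NormedAddCommGroup Y]
    (F : X → Set Y) (x : X) (y : Y) : ℝ≥0∞ :=
  Filter.liminf (fun x' : X => EMetric.infEdist y (F x')) (𝓝 x)

/-- The nonlocal slope `|Γf|(x)`: equal to `+∞` if `f x = +∞`, to `0` if `x` is a local
minimum of `f`, and otherwise to `sup_{z ≠ x} [f(x) − f(z)]₊ / d(x,z)` (the positive part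
being realized by the truncated subtraction of `ℝ≥0∞`). -/
def nonlocalSlope {X : Type*} [PseudoEMetricSpace X] (f : X → ℝ≥0∞) (x : X) : ℝ≥0∞ :=
  if f x = ⊤ then ⊤
  else if ∀ᶠ z in 𝓝 x, f x ≤ f z then 0
  else ⨆ z : {z : X // z ≠ x}, (f x - f (z : X)) / edist x (z : X)

/-- The local slope `|∇f|(x)`: equal to `+∞` if `f x = +∞`, to `0` if `x` is a local
minimum of `f`, and otherwise to `limsup_{z → x, z ≠ x} (f(x) − f(z)) / d(x,z)`. -/
def localSlope {X : Type*} [PseudoEMetricSpace X] (f : X → ℝ≥0∞) (x : X) : ℝ≥0∞ :=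
  if f x = ⊤ then ⊤
  else if ∀ᶠ z in 𝓝 x, f x ≤ f z then 0
  else Filter.limsup (fun z : X => (f x - f z) / edist x z) (𝓝[≠] x)

/-- The filter of directional convergence `(x,y) →_{(u,v)} (xbar,ybar)`:
convergence to `(xbar,ybar)` together with eventual membership of `(x,y) − (xbar,ybar)`
in every conic neighborhood `cone B((u,v), δ)`, `δ > 0`, of the direction `(u,v)`. -/
def dirFilter {X Y : Type*} [NormedAddCommGroup X] [NormedSpace ℝ X]
    [NormedAddCommGroup Y] [NormedSpace ℝ Y] (xbar : X) (ybar : Y) (u : X) (v : Y) :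
    Filter (X × Y) :=
  𝓝 (xbar, ybar) ⊓
    ⨅ (δ : ℝ) (_ : 0 < δ), 𝓟 {p : X × Y | (p.1 - xbar, p.2 - ybar) ∈ coneBall2 u v δ}

/-- The filter encoding the constrained directional convergence
`(x,y) →_{(u,v)} (xbar,ybar)`, `φ(x,y) > 0`, `φ(x,y)^γ/‖(x,y) − (xbar,ybar)‖ → 0`. -/
def dirRegFilter {X Y : Type*} [NormedAddCommGroup X] [NormedSpace ℝ X]
    [NormedAddCommGroup Y] [NormedSpace ℝ Y]
    (F : X → Set Y) (xbar : X) (ybar : Y) (u : X) (v : Y) (γ : ℝ) : Filter (X × Y) :=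
  dirFilter xbar ybar u v ⊓ 𝓟 {p : X × Y | 0 < lscEnv F p.1 p.2} ⊓
    ⨅ (η : ℝ) (_ : 0 < η),
      𝓟 {p : X × Y |
        lscEnv F p.1 p.2 ^ γ < ENNReal.ofReal (η * (‖p.1 - xbar‖ + ‖p.2 - ybar‖))}

section Ekeland

variable {X : Type*} [PseudoEMetricSpace X] {f : X → ℝ≥0∞} {σ : ℝ≥0∞} {x w : X}

def ekelandSet (f : X → ℝ≥0∞) (σ : ℝ≥0∞) (x : X) : Set X :=
  {w | f w + σ * edist x w ≤ f x}

lemma self_mem_ekelandSet : x ∈ ekelandSet f σ x := by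
  simp [ekelandSet]

lemma le_of_mem_ekelandSet (hw : w ∈ ekelandSet f σ x) : f w ≤ f x :=
  le_self_add.trans hw

lemma ekelandSet_subset {x' : X} (hx' : x' ∈ ekelandSet f σ x) :
    ekelandSet f σ x' ⊆ ekelandSet f σ x := fun w hw =>
  calc f w + σ * edist x w ≤ f w + σ * edist x' w + σ * edist x x' := by
        rw [add_assoc, ← mul_add, add_comm (edist x' w)]
        gcongr
        exact edist_triangle _ _ _
    _ ≤ f x' + σ * edist x x' := by gcongr; exact hw
    _ ≤ f x := hx'

lemma LowerSemicontinuous.isClosed_ekelandSet (hf : LowerSemicontinuous f) (hσ : σ ≠ ⊤)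
    (x : X) : IsClosed (ekelandSet f σ x) :=
  (hf.add ((ENNReal.continuous_const_mul hσ).comp
    (continuous_const.edist continuous_id)).lowerSemicontinuous).isClosed_preimage (f x)

lemma exists_mem_ekelandSet_forall_le_add (hx : f x ≠ ⊤) {ε : ℝ≥0∞} (hε : ε ≠ 0) :
    ∃ x' ∈ ekelandSet f σ x, ∀ w ∈ ekelandSet f σ x, f x' ≤ f w + ε := by
  set m := sInf (f '' ekelandSet f σ x)
  have hm : m ≠ ⊤ := ne_top_of_le_ne_top hx (sInf_le (mem_image_of_mem f self_mem_ekelandSet))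
  obtain ⟨_, ⟨x', hx', rfl⟩, hlt⟩ := sInf_lt_iff.1 (ENNReal.lt_add_right hm hε)
  exact ⟨x', hx', fun w hw => hlt.le.trans (by gcongr; exact sInf_le (mem_image_of_mem f hw))⟩

lemma mul_edist_le_of_mem_ekelandSet {ε : ℝ≥0∞} (hw : w ∈ ekelandSet f σ x)
    (hle : f x ≤ f w + ε) (hfw : f w ≠ ⊤) : σ * edist x w ≤ ε :=
  (ENNReal.add_le_add_iff_left hfw).1 (hw.trans hle)

theorem LowerSemicontinuous.exists_ekeland [CompleteSpace X] (hf : LowerSemicontinuous f)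
    (hσ0 : σ ≠ 0) (hσ : σ ≠ ⊤) {x₀ : X} (h₀ : f x₀ ≠ ⊤) :
    ∃ z, f z + σ * edist x₀ z ≤ f x₀ ∧ ∀ w, f z ≤ f w + σ * edist z w := by
  set ε : ℕ → ℝ≥0∞ := fun n => σ * 2⁻¹ ^ n
  have hε : ∀ n, ε n ≠ 0 := fun n => mul_ne_zero hσ0 (by simp)
  choose! next hnext hnext_le using
    fun x (hx : f x ≠ ⊤) n => exists_mem_ekelandSet_forall_le_add (σ := σ) hx (hε n)
  let seq : ℕ → X := fun n => Nat.rec x₀ (fun n x => next x n) n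
  have hfin : ∀ n, f (seq n) ≠ ⊤ := by
    intro n
    induction n with
    | zero => exact h₀
    | succ n ih => exact ne_top_of_le_ne_top ih (le_of_mem_ekelandSet (hnext _ ih n))
  have hstep : ∀ n, seq (n + 1) ∈ ekelandSet f σ (seq n) := fun n => hnext _ (hfin n) n
  have hchain : ∀ n m, n ≤ m → seq m ∈ ekelandSet f σ (seq n) := by
    intro n m hnm
    induction m, hnm using Nat.le_induction with
    | base => exact self_mem_ekelandSet
    | succ m _ ih => exact ekelandSet_subset ih (hstep m)
  have hnear : ∀ n, ∀ w ∈ ekelandSet f σ (seq (n + 1)), edist (seq (n + 1)) w ≤ 2⁻¹ ^ n := by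
    intro n w hw
    refine (ENNReal.mul_le_mul_iff_right hσ0 hσ).1 (mul_edist_le_of_mem_ekelandSet hw ?_ ?_)
    · exact hnext_le _ (hfin n) n w (ekelandSet_subset (hstep n) hw)
    · exact ne_top_of_le_ne_top (hfin (n + 1)) (le_of_mem_ekelandSet hw)
  have hcauchy : CauchySeq seq := by
    refine (cauchySeq_shift 1).1 (cauchySeq_of_edist_le_geometric_two 1 ENNReal.one_ne_top ?_)
    intro n
    simpa [ENNReal.inv_pow] using hnear n _ (hstep (n + 1))
  obtain ⟨z, hz⟩ := cauchySeq_tendsto_of_complete hcauchy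
  have hzS : ∀ n, z ∈ ekelandSet f σ (seq n) := fun n =>
    (hf.isClosed_ekelandSet hσ _).mem_of_tendsto hz
      (eventually_atTop.2 ⟨n, fun m hm => hchain n m hm⟩)
  refine ⟨z, hzS 0, fun w => ?_⟩
  by_contra! hw
  have hwS : ∀ n, w ∈ ekelandSet f σ (seq n) := fun n => ekelandSet_subset (hzS n) hw.le
  have hε_lim : Tendsto (fun n => f w + ε n) atTop (𝓝 (f w)) := by
    simpa using tendsto_const_nhds.add (ENNReal.Tendsto.const_mul
      (ENNReal.tendsto_pow_atTop_nhds_zero_of_lt_one (by norm_num)) (Or.inr hσ))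
  have hzw : f z ≤ f w := ge_of_tendsto' hε_lim fun n =>
    (le_of_mem_ekelandSet (hzS (n + 1))).trans (hnext_le _ (hfin n) n w (hwS n))
  exact (hw.trans_le (hzw.trans le_self_add)).false

end Ekeland

lemma localSlope_le_of_forall_le_add_mul_edist {X : Type*} [PseudoEMetricSpace X]
    {f : X → ℝ≥0∞} {z : X} {σ : ℝ≥0∞} (hz : f z ≠ ⊤) (h : ∀ w, f z ≤ f w + σ * edist z w) :
    localSlope f z ≤ σ := by
  rw [localSlope, if_neg hz]
  split_ifs
  · exact zero_le
  · refine limsup_le_of_le (by isBoundedDefault) ?_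
    filter_upwards with w
    exact ENNReal.div_le_of_le_mul (tsub_le_iff_right.2 ((h w).trans_eq (add_comm _ _)))

theorem LowerSemicontinuous.exists_localSlope_le {X : Type*} [PseudoEMetricSpace X]
    [CompleteSpace X] {f : X → ℝ≥0∞} (hf : LowerSemicontinuous f) {σ : ℝ≥0∞} (hσ0 : σ ≠ 0)
    (hσ : σ ≠ ⊤) {x : X} (hx : f x ≠ ⊤) :
    ∃ z, f z ≤ f x ∧ edist x z ≤ f x / σ ∧ localSlope f z ≤ σ := by
  obtain ⟨z, hzx, hmin⟩ := hf.exists_ekeland hσ0 hσ hx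
  refine ⟨z, le_self_add.trans hzx, ?_, ?_⟩
  · rw [ENNReal.le_div_iff_mul_le (Or.inl hσ0) (Or.inl hσ), mul_comm]
    exact le_add_self.trans hzx
  · exact localSlope_le_of_forall_le_add_mul_edist (ne_top_of_le_ne_top hx
      (le_self_add.trans hzx)) hmin

section LscEnvelope

variable {X Y : Type*} [NormedAddCommGroup X] [NormedSpace ℝ X] [NormedAddCommGroup Y]
  {F : X → Set Y}

lemma lowerSemicontinuous_lscEnv (F : X → Set Y) (y : Y) :
    LowerSemicontinuous (lscEnv F · y) := by
  intro x b hb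
  obtain ⟨b', hbb', hb'⟩ := exists_between hb
  obtain ⟨s, hs, hsub⟩ := (eventually_lt_of_lt_liminf hb').exists_mem
  filter_upwards [interior_mem_nhds.2 hs] with x' hx'
  refine hbb'.trans_le (le_liminf_of_le (by isBoundedDefault) ?_)
  filter_upwards [isOpen_interior.mem_nhds hx'] with w hw
  exact (hsub w (interior_subset hw)).le

lemma lscEnv_le_infEDist (F : X → Set Y) (x : X) (y : Y) :
    lscEnv F x y ≤ infEDist y (F x) :=
  liminf_le_of_frequently_le (frequently_iff.2 fun hs => ⟨x, mem_of_mem_nhds hs, le_rfl⟩)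
    (by isBoundedDefault)

lemma mem_of_lscEnv_eq_zero (hF : IsClosed {p : X × Y | p.2 ∈ F p.1}) {x : X} {y : Y}
    (h : lscEnv F x y = 0) : y ∈ F x := by
  suffices (x, y) ∈ closure {p : X × Y | p.2 ∈ F p.1} from hF.closure_subset this
  refine Metric.mem_closure_iff.2 fun ε hε => ?_
  have hlt : lscEnv F x y < ENNReal.ofReal ε := h ▸ ENNReal.ofReal_pos.2 hε
  obtain ⟨x', hx', hx'y⟩ := ((frequently_lt_of_liminf_lt (by isBoundedDefault) hlt).and_eventually
    (Metric.ball_mem_nhds x hε)).exists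
  obtain ⟨y', hy', hyy'⟩ := infEDist_lt_iff.1 hx'
  refine ⟨(x', y'), hy', max_lt (by simpa [dist_comm] using hx'y) ?_⟩
  exact edist_lt_ofReal.1 hyy'

lemma lscEnv_rpow_le_of_infEDist_le {x : X} {y : Y} {γ δ N : ℝ} (hγ : 0 < γ) (hδ : 0 ≤ δ)
    (hN : 0 ≤ N) (h : infEDist y (F x) ≤ ENNReal.ofReal (δ * N ^ (1 / γ))) :
    lscEnv F x y ^ γ ≤ ENNReal.ofReal (δ ^ γ * N) :=
  calc lscEnv F x y ^ γ ≤ ENNReal.ofReal (δ * N ^ (1 / γ)) ^ γ :=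
        ENNReal.rpow_le_rpow ((lscEnv_le_infEDist F x y).trans h) hγ.le
    _ = ENNReal.ofReal (δ ^ γ * N) := by
        rw [ENNReal.ofReal_rpow_of_nonneg (by positivity) hγ.le,
          Real.mul_rpow hδ (by positivity), ← Real.rpow_mul hN, one_div,
          inv_mul_cancel₀ hγ.ne', Real.rpow_one]

theorem infEDist_le_or_exists_localSlope_le [CompleteSpace X]
    (hF : IsClosed {p : X × Y | p.2 ∈ F p.1}) {x : X} {y : Y} {γ σ c : ℝ} (hγ : 0 < γ)
    (hσ : 0 < σ) (hc : 0 ≤ c) (hx : lscEnv F x y ^ γ ≤ ENNReal.ofReal c) :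
    infEDist x {x' | y ∈ F x'} ≤ ENNReal.ofReal σ⁻¹ * infEDist y (F x) ^ γ ∨
      ∃ z, 0 < lscEnv F z y ∧ lscEnv F z y ^ γ ≤ ENNReal.ofReal c ∧ ‖z - x‖ ≤ c / σ ∧
        localSlope (lscEnv F · y ^ γ) z ≤ ENNReal.ofReal σ := by
  have hf : LowerSemicontinuous (lscEnv F · y ^ γ) :=
    ENNReal.continuous_rpow_const.comp_lowerSemicontinuous (lowerSemicontinuous_lscEnv F y)
      (fun _ _ hab => ENNReal.rpow_le_rpow hab hγ.le)
  obtain ⟨z, hfz, hxz, hslope⟩ := hf.exists_localSlope_le (ENNReal.ofReal_pos.2 hσ).ne'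
    ENNReal.ofReal_ne_top (ne_top_of_le_ne_top ENNReal.ofReal_ne_top hx)
  by_cases hz : lscEnv F z y = 0
  · left
    calc infEDist x {x' | y ∈ F x'} ≤ edist x z :=
          infEDist_le_edist_of_mem (mem_of_lscEnv_eq_zero hF hz)
      _ ≤ lscEnv F x y ^ γ / ENNReal.ofReal σ := hxz
      _ ≤ infEDist y (F x) ^ γ / ENNReal.ofReal σ := by
          gcongr; exact lscEnv_le_infEDist F x y
      _ = ENNReal.ofReal σ⁻¹ * infEDist y (F x) ^ γ := by
          rw [ENNReal.ofReal_inv_of_pos hσ, ENNReal.div_eq_inv_mul]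
  · right
    refine ⟨z, pos_iff_ne_zero.2 hz, hfz.trans hx, ?_, hslope⟩
    have : edist x z ≤ ENNReal.ofReal (c / σ) := by
      rw [ENNReal.ofReal_div_of_pos hσ]
      exact hxz.trans (by gcongr)
    rwa [edist_le_ofReal (by positivity), dist_eq_norm'] at this

end LscEnvelope

section Cone

variable {X Y : Type*} [NormedAddCommGroup X] [NormedSpace ℝ X]
  [NormedAddCommGroup Y] [NormedSpace ℝ Y] {u : X} {v : Y}

lemma coneBall2_mono : Monotone (coneBall2 u v) := by
  rintro δ δ' hδ _ ⟨lam, hlam, w, z, hwz, rfl⟩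
  exact ⟨lam, hlam, w, z, hwz.trans_le hδ, rfl⟩

lemma mem_coneBall2_of_norm_sub_le {a a' : X} {b : Y} {δ t : ℝ}
    (h : (a, b) ∈ coneBall2 u v δ) (ht : 0 ≤ t) (ha' : ‖a' - a‖ ≤ t * (‖a‖ + ‖b‖)) :
    (a', b) ∈ coneBall2 u v (δ + t * (‖u‖ + ‖v‖ + δ)) := by
  obtain ⟨lam, hlam, w, z, hwz, heq⟩ := h
  obtain ⟨rfl, rfl⟩ := Prod.mk.inj heq
  have hnorm : ‖lam • w‖ + ‖lam • z‖ = lam * (‖w‖ + ‖z‖) := by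
    rw [norm_smul, norm_smul, Real.norm_of_nonneg hlam, mul_add]
  have hwz_le : ‖w‖ + ‖z‖ ≤ ‖u‖ + ‖v‖ + δ := by
    linarith [norm_le_norm_add_norm_sub' w u, norm_le_norm_add_norm_sub' z v]
  -- when `lam = 0`, both `lam⁻¹ = 0` and `a' = a = 0`
  have hshift : ‖lam⁻¹ • (a' - lam • w)‖ ≤ t * (‖w‖ + ‖z‖) := by
    rw [norm_smul, Real.norm_of_nonneg (inv_nonneg.2 hlam)]
    calc lam⁻¹ * ‖a' - lam • w‖ ≤ lam⁻¹ * (t * (lam * (‖w‖ + ‖z‖))) := by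
          rw [← hnorm]; gcongr
      _ = (lam⁻¹ * lam) * (t * (‖w‖ + ‖z‖)) := by ring
      _ ≤ t * (‖w‖ + ‖z‖) := by
          refine mul_le_of_le_one_left (by positivity) ?_
          rcases hlam.eq_or_lt with rfl | hpos
          · simp
          · rw [inv_mul_cancel₀ hpos.ne']
  refine ⟨lam, hlam, w + lam⁻¹ • (a' - lam • w), z, ?_, ?_⟩
  · calc ‖w + lam⁻¹ • (a' - lam • w) - u‖ + ‖z - v‖
          ≤ ‖w - u‖ + ‖z - v‖ + ‖lam⁻¹ • (a' - lam • w)‖ := by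
            rw [add_sub_right_comm]; linarith [norm_add_le (w - u) (lam⁻¹ • (a' - lam • w))]
      _ < δ + t * (‖u‖ + ‖v‖ + δ) := by
            have := mul_le_mul_of_nonneg_left hwz_le ht
            linarith
  · have : lam • lam⁻¹ • (a' - lam • w) = a' - lam • w := by
      rcases eq_or_ne lam 0 with rfl | hpos
      · simpa using (norm_le_zero_iff.1 (by simpa using ha')).symm
      · exact smul_inv_smul₀ hpos _
    rw [smul_add, this, add_sub_cancel]

end Cone

lemma Filter.hasBasis_biInf_principal_of_monotone {α : Type*} {s : ℝ → Set α}
    (hs : Monotone s) : (⨅ (ε : ℝ) (_ : 0 < ε), 𝓟 (s ε)).HasBasis (0 < ·) s :=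
  hasBasis_biInf_principal' (fun i hi j hj =>
    ⟨min i j, lt_min hi hj, hs (min_le_left i j), hs (min_le_right i j)⟩) ⟨1, one_pos⟩

section DirRegFilter

variable {X Y : Type*} [NormedAddCommGroup X] [NormedSpace ℝ X]
  [NormedAddCommGroup Y] [NormedSpace ℝ Y]

lemma hasBasis_dirRegFilter (F : X → Set Y) (xbar : X) (ybar : Y) (u : X) (v : Y) (γ : ℝ) :
    (dirRegFilter F xbar ybar u v γ).HasBasis
      (fun i : (ℝ × ℝ) × ℝ => (0 < i.1.1 ∧ 0 < i.1.2) ∧ 0 < i.2)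
      (fun i => ball (xbar, ybar) i.1.1 ∩
          {p | (p.1 - xbar, p.2 - ybar) ∈ coneBall2 u v i.1.2} ∩
          {p | 0 < lscEnv F p.1 p.2} ∩
          {p | lscEnv F p.1 p.2 ^ γ < ENNReal.ofReal (i.2 * (‖p.1 - xbar‖ + ‖p.2 - ybar‖))}) := by
  refine ((nhds_basis_ball.inf (hasBasis_biInf_principal_of_monotone ?_)).inf_principal _).inf
    (hasBasis_biInf_principal_of_monotone ?_)
  · exact fun δ δ' hδ p hp => coneBall2_mono hδ hp
  · intro η η' hη p hp
    exact hp.trans_le (ENNReal.ofReal_le_ofReal (by gcongr))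

lemma exists_forall_of_eventually_dirRegFilter {F : X → Set Y} {xbar : X} {ybar : Y} {u : X}
    {v : Y} {γ : ℝ} {P : X × Y → Prop} (h : ∀ᶠ p in dirRegFilter F xbar ybar u v γ, P p) :
    ∃ r > (0:ℝ), ∃ δ > (0:ℝ), ∃ η > (0:ℝ), ∀ x y,
      ‖x - xbar‖ + ‖y - ybar‖ < r → (x - xbar, y - ybar) ∈ coneBall2 u v δ →
      0 < lscEnv F x y →
      lscEnv F x y ^ γ < ENNReal.ofReal (η * (‖x - xbar‖ + ‖y - ybar‖)) → P (x, y) := by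
  obtain ⟨⟨⟨r, δ⟩, η⟩, ⟨⟨hr, hδ⟩, hη⟩, hsub⟩ :=
    (hasBasis_dirRegFilter F xbar ybar u v γ).eventually_iff.1 h
  refine ⟨r, hr, δ, hδ, η, hη, fun x y hN hcone hpos hlt => hsub ⟨⟨⟨?_, hcone⟩, hpos⟩, hlt⟩⟩
  rw [mem_ball, Prod.dist_eq, dist_eq_norm, dist_eq_norm]
  exact max_lt (by linarith [norm_nonneg (y - ybar)]) (by linarith [norm_nonneg (x - xbar)])

end DirRegFilter

section Regularity

variable {X Y : Type*} [NormedAddCommGroup X] [NormedSpace ℝ X] [CompleteSpace X]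
  [NormedAddCommGroup Y] [NormedSpace ℝ Y] {F : X → Set Y}

theorem exists_infEDist_le_of_localSlope_gt (hF : IsClosed {p : X × Y | p.2 ∈ F p.1})
    {xbar : X} {ybar : Y} {u : X} {v : Y} {γ σ r δ₀ η : ℝ} (hγ : 0 < γ) (hσ : 0 < σ)
    (hr : 0 < r) (hδ₀ : 0 < δ₀) (hη : 0 < η)
    (hslope : ∀ x y, ‖x - xbar‖ + ‖y - ybar‖ < r → (x - xbar, y - ybar) ∈ coneBall2 u v δ₀ →
      0 < lscEnv F x y →
      lscEnv F x y ^ γ < ENNReal.ofReal (η * (‖x - xbar‖ + ‖y - ybar‖)) →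
      ENNReal.ofReal σ < localSlope (lscEnv F · y ^ γ) x) :
    ∃ δ > (0:ℝ), ∀ x y, ‖x - xbar‖ + ‖y - ybar‖ < δ → (x - xbar, y - ybar) ∈ coneBall2 u v δ →
      infEDist y (F x) ≤ ENNReal.ofReal (δ * (‖x - xbar‖ + ‖y - ybar‖) ^ (1 / γ)) →
      infEDist x {x' | y ∈ F x'} ≤ ENNReal.ofReal σ⁻¹ * infEDist y (F x) ^ γ := by
  set M := ‖u‖ + ‖v‖ + δ₀
  have hpow : Tendsto (fun δ : ℝ => δ ^ γ) (𝓝[>] 0) (𝓝 0) := by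
    simpa [Real.zero_rpow hγ.ne'] using
      (Real.continuousAt_rpow_const 0 γ (Or.inr hγ.le)).tendsto.mono_left nhdsWithin_le_nhds
  have hsmall : ∀ᶠ δ in 𝓝[>] (0:ℝ), 0 < δ ∧ δ < r / 2 ∧ δ ≤ δ₀ / 2 ∧
      δ ^ γ / σ ≤ 1 / 2 ∧ δ ^ γ / σ * M ≤ δ₀ / 2 ∧ δ ^ γ < η / 2 :=
    eventually_mem_nhdsWithin.and <|
      ((eventually_lt_nhds (by positivity)).filter_mono nhdsWithin_le_nhds).and <|
      ((eventually_le_nhds (by positivity)).filter_mono nhdsWithin_le_nhds).and <|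
      ((hpow.div_const σ).eventually (Iic_mem_nhds (by simp))).and <|
      (((hpow.div_const σ).mul_const M).eventually (Iic_mem_nhds (by simp; positivity))).and <|
      hpow.eventually (Iio_mem_nhds (by positivity))
  obtain ⟨δ, hδ, hδr, hδδ₀, ht_half, htM, hδη⟩ := hsmall.exists
  refine ⟨δ, hδ, fun x y hN hcone hd => ?_⟩
  set N := ‖x - xbar‖ + ‖y - ybar‖
  set t := δ ^ γ / σ
  have hfx := lscEnv_rpow_le_of_infEDist_le hγ hδ.le (by positivity) hd
  rcases infEDist_le_or_exists_localSlope_le hF hγ hσ (by positivity) hfx with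
    h | ⟨z, hz, hfz, hzx, hslope_z⟩
  · exact h
  -- otherwise `(z, y)` lies in the region where the slope exceeds `σ`
  exfalso
  rw [← div_mul_eq_mul_div] at hzx
  have hN_pos : 0 < N := pos_of_mul_pos_right (ENNReal.ofReal_pos.1
    ((ENNReal.rpow_pos_of_nonneg hz hγ.le).trans_le hfz)) (by positivity)
  have hNz_le : ‖z - xbar‖ + ‖y - ybar‖ ≤ N + t * N := by
    linarith [norm_sub_le_norm_sub_add_norm_sub z x xbar]
  have hNz_ge : N / 2 ≤ ‖z - xbar‖ + ‖y - ybar‖ := by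
    have := mul_le_mul_of_nonneg_right ht_half hN_pos.le
    linarith [norm_sub_le_norm_sub_add_norm_sub x z xbar, norm_sub_rev x z]
  have hcone_z : (z - xbar, y - ybar) ∈ coneBall2 u v δ₀ := by
    refine coneBall2_mono ?_ (mem_coneBall2_of_norm_sub_le (t := t) hcone (by positivity)
      (by rwa [sub_sub_sub_cancel_right]))
    have : t * (‖u‖ + ‖v‖ + δ) ≤ t * M := by gcongr; linarith
    linarith
  have hφ_z : lscEnv F z y ^ γ < ENNReal.ofReal (η * (‖z - xbar‖ + ‖y - ybar‖)) := by
    refine hfz.trans_lt ((ENNReal.ofReal_lt_ofReal_iff (mul_pos hη (by linarith))).2 ?_)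
    nlinarith
  exact (hslope z y (by nlinarith) hcone_z hz hφ_z).not_ge hslope_z

end Regularity

theorem dirHolderRegular_of_liminf_localSlope_pos_general
    {X Y : Type*} [NormedAddCommGroup X] [NormedSpace ℝ X] [CompleteSpace X]
    [NormedAddCommGroup Y] [NormedSpace ℝ Y]
    (F : X → Set Y) (hF : IsClosed {p : X × Y | p.2 ∈ F p.1})
    (xbar : X) (ybar : Y) (u : X) (v : Y)
    (γ : ℝ) (hγ0 : 0 < γ)
    (hslope : 0 < Filter.liminf
        (fun p : X × Y => localSlope (fun x : X => lscEnv F x p.2 ^ γ) p.1)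
        (dirRegFilter F xbar ybar u v γ)) :
    ∃ τ > (0:ℝ), ∃ δ > (0:ℝ), ∀ x : X, ∀ y : Y,
      ‖x - xbar‖ + ‖y - ybar‖ < δ →
      (x - xbar, y - ybar) ∈ coneBall2 u v δ →
      EMetric.infEdist y (F x) ≤ ENNReal.ofReal (δ * (‖x - xbar‖ + ‖y - ybar‖) ^ (1/γ)) →
      EMetric.infEdist x {x' : X | y ∈ F x'} ≤
        ENNReal.ofReal τ * EMetric.infEdist y (F x) ^ γ := by
  obtain ⟨σ, -, hσ0, hσ⟩ := ENNReal.lt_iff_exists_real_btwn.1 hslope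
  obtain ⟨r, hr, δ₀, hδ₀, η, hη, hreg⟩ :=
    exists_forall_of_eventually_dirRegFilter (eventually_lt_of_lt_liminf hσ)
  have hσpos : 0 < σ := ENNReal.ofReal_pos.1 hσ0
  obtain ⟨δ, hδ, h⟩ := exists_infEDist_le_of_localSlope_gt hF hγ0 hσpos hr hδ₀ hη hreg
  exact ⟨σ⁻¹, inv_pos.2 hσpos, δ, hδ, h⟩

/-- Theorem 2 of the paper: if the liminf of the local slopes
`|∇ φ^γ(·,y)|(x)`, taken as `(x,y) →_{(u,v)} (xbar,ybar)` with `φ(x,y) > 0` and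
`φ(x,y)^γ/‖(x,y) − (xbar,ybar)‖ → 0`, is positive, then there exist `τ, δ > 0` with
`d(x, F⁻¹(y)) ≤ τ d(y, F(x))^γ` for all `(x,y) ∈ B((xbar,ybar),δ)` with
`(x,y) ∈ (xbar,ybar) + cone B((u,v),δ)` and `d(y,F(x)) ≤ δ‖(x,y) − (xbar,ybar)‖^(1/γ)`;
i.e. `F` is directionally metrically `γ`-regular at `(xbar,ybar)` in direction `(u,v)`. -/
theorem dirHolderRegular_of_liminf_localSlope_pos
    {X Y : Type*} [NormedAddCommGroup X] [NormedSpace ℝ X] [CompleteSpace X]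
    [NormedAddCommGroup Y] [NormedSpace ℝ Y]
    (F : X → Set Y) (hF : IsClosed {p : X × Y | p.2 ∈ F p.1})
    (xbar : X) (ybar : Y) (hxy : ybar ∈ F xbar) (u : X) (v : Y)
    (γ : ℝ) (hγ0 : 0 < γ) (hγ1 : γ ≤ 1)
    (hslope : 0 < Filter.liminf
        (fun p : X × Y => localSlope (fun x : X => lscEnv F x p.2 ^ γ) p.1)
        (dirRegFilter F xbar ybar u v γ)) :
    ∃ τ > (0:ℝ), ∃ δ > (0:ℝ), ∀ x : X, ∀ y : Y,
      ‖x - xbar‖ + ‖y - ybar‖ < δ →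
      (x - xbar, y - ybar) ∈ coneBall2 u v δ →
      EMetric.infEdist y (F x) ≤ ENNReal.ofReal (δ * (‖x - xbar‖ + ‖y - ybar‖) ^ (1/γ)) →
      EMetric.infEdist x {x' : X | y ∈ F x'} ≤
        ENNReal.ofReal τ * EMetric.infEdist y (F x) ^ γ :=
  dirHolderRegular_of_liminf_localSlope_pos_general F hF xbar ybar u v γ hγ0 hslope

end
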